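/- arXiv:1503.05699 — 3 statements merged into one kernel-verified Lean document; each statement's English description precedes it below -/
import Mathlib

section
/- Let a, b > 0 and let g : (0,a] × [0,b] → [0,∞) satisfy g(t,x) ≤ p(t) ψ(t,x) for all (t,x), where p(t) = (1 + q₁(t))/t and ψ(t,x) = (1 + q₂(t) x^γ) x, with q₁ : (0,a] → [0,∞) measurable and ∫_0^a q₁(s)/s ds < +∞, q₂ : [0,a] → [0,∞) continuous with q₂' continuous and integrable on (0,a), and γ > 0. Then g is a uniqueness bound. -/
/-! Since `φ ≤ K t`, the hypothesis gives `φ' ≤ (1/t + r(t)) φ` a.e. with `r` integrable on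
`(0, a']`. If `φ(t₀) > 0`, then on the interval `(c, t₀]` after the last zero `c` of `φ`,
`log (φ t / t)` has derivative at most `r`, so `φ(s)/s ≥ e^{-∫ |r|} φ(t₀)/t₀ > 0` for
`s ∈ (c, t₀)`. Letting `s ↓ c` contradicts `φ(c) = 0` if `c > 0`, and `φ'(0) = 0` if `c = 0`. -/

open MeasureTheory Set

/-- A function `g : (0,a] × [0,b] → [0,∞)` is a *uniqueness bound* (Definition 1)
if for every `a' ∈ (0,a]` the only Lipschitz continuous function
`φ : [0,a'] → [0,∞)` (taking values in the domain `[0,b]` of `g`) satisfying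
`φ'(t) ≤ g(t,φ(t))` for almost all `t ∈ (0,a']`, `φ(0) = 0` and `φ'(0) = 0`,
is `φ ≡ 0` on `[0,a']`. -/
def IsUniquenessBound (a b : ℝ) (g : ℝ → ℝ → ℝ) : Prop :=
  ∀ a' ∈ Set.Ioc (0:ℝ) a, ∀ φ : ℝ → ℝ,
    (∃ K, LipschitzOnWith K φ (Set.Icc 0 a')) →
    (∀ t ∈ Set.Icc (0:ℝ) a', φ t ∈ Set.Icc (0:ℝ) b) →
    φ 0 = 0 →
    HasDerivWithinAt φ 0 (Set.Ici 0) 0 →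
    (∀ᵐ t ∂volume, t ∈ Set.Ioc (0:ℝ) a' → ∀ y, HasDerivAt φ y t → y ≤ g t (φ t)) →
    ∀ t ∈ Set.Icc (0:ℝ) a', φ t = 0

open Filter Topology NNReal

theorem LipschitzOnWith.sub_le_integral_of_ae_hasDerivAt_le {f r : ℝ → ℝ} {K : ℝ≥0} {s t : ℝ}
    (hst : s ≤ t) (hf : LipschitzOnWith K f (Icc s t)) (hr : IntegrableOn r (Ioc s t))
    (hbd : ∀ᵐ u, u ∈ Ioo s t → ∀ y, HasDerivAt f y u → y ≤ r u) :
    f t - f s ≤ ∫ u in Ioc s t, r u := by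
  rw [← uIcc_of_le hst] at hf
  have hac := hf.absolutelyContinuousOnInterval
  rw [← hac.integral_deriv_eq_sub, intervalIntegral.integral_of_le hst,
    setIntegral_congr_set Ioo_ae_eq_Ioc.symm, setIntegral_congr_set Ioo_ae_eq_Ioc.symm]
  refine setIntegral_mono_on_ae ?_ (hr.mono_set Ioo_subset_Ioc_self) measurableSet_Ioo ?_
  · exact ((intervalIntegrable_iff_integrableOn_Ioc_of_le hst).1
      hac.intervalIntegrable_deriv).mono_set Ioo_subset_Ioc_self
  filter_upwards [hac.ae_differentiableAt, hbd] with u hdiff hbd hu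
  exact hbd hu _ (hdiff (uIcc_of_le hst ▸ Ioo_subset_Icc_self hu)).hasDerivAt

theorem Real.lipschitzOnWith_log_Ici {m : ℝ} (hm : 0 < m) :
    LipschitzOnWith (Real.toNNReal m⁻¹) Real.log (Ici m) := by
  refine (convex_Ici m).lipschitzOnWith_of_nnnorm_hasDerivWithin_le
    (fun x hx => (Real.hasDerivAt_log (hm.trans_le hx).ne').hasDerivWithinAt) fun x hx => ?_
  rw [← NNReal.coe_le_coe, coe_nnnorm, Real.coe_toNNReal _ (inv_nonneg.2 hm.le), Real.norm_eq_abs,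
    abs_of_pos (inv_pos.2 (hm.trans_le hx))]
  exact inv_anti₀ hm hx

theorem LipschitzOnWith.div_le_exp_integral_mul_div {φ r : ℝ → ℝ} {K : ℝ≥0} {s t : ℝ}
    (hs : 0 < s) (hst : s ≤ t) (hφ : LipschitzOnWith K φ (Icc s t))
    (hpos : ∀ u ∈ Icc s t, 0 < φ u) (hr : IntegrableOn r (Ioc s t))
    (hbd : ∀ᵐ u, u ∈ Ioo s t → ∀ y, HasDerivAt φ y u → y ≤ (u⁻¹ + r u) * φ u) :
    φ t / t ≤ Real.exp (∫ u in Ioc s t, r u) * (φ s / s) := by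
  obtain ⟨v, hv, hvmin⟩ := isCompact_Icc.exists_isMinOn (nonempty_Icc.2 hst) hφ.continuousOn
  have hlog_lip : LipschitzOnWith _ (fun u => Real.log (φ u) - Real.log u) (Icc s t) :=
    ((Real.lipschitzOnWith_log_Ici (hpos v hv)).comp hφ fun u hu => hvmin hu).sub
      ((Real.lipschitzOnWith_log_Ici hs).mono Icc_subset_Ici_self)
  have hφ_diff := (uIcc_of_le hst ▸ hφ).absolutelyContinuousOnInterval.ae_differentiableAt
  have hlog := hlog_lip.sub_le_integral_of_ae_hasDerivAt_le hst hr <| by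
    filter_upwards [hbd, hφ_diff] with u hbd hdiff hu y hy
    have hu0 : 0 < u := hs.trans hu.1
    have hφu := hpos u (Ioo_subset_Icc_self hu)
    have hφ' := (hdiff (uIcc_of_le hst ▸ Ioo_subset_Icc_self hu)).hasDerivAt
    rw [hy.unique ((hφ'.log hφu.ne').sub (Real.hasDerivAt_log hu0.ne'))]
    have := (div_le_iff₀ hφu).2 (hbd hu _ hφ')
    linarith
  calc φ t / t = Real.exp (Real.log (φ t) - Real.log t) := by
        rw [Real.exp_sub, Real.exp_log (hpos t (right_mem_Icc.2 hst)),
          Real.exp_log (hs.trans_le hst)]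
    _ ≤ Real.exp ((∫ u in Ioc s t, r u) + (Real.log (φ s) - Real.log s)) :=
        Real.exp_le_exp.2 (by linarith)
    _ = _ := by
        rw [Real.exp_add, Real.exp_sub, Real.exp_log (hpos s (left_mem_Icc.2 hst)), Real.exp_log hs]

theorem ContinuousOn.exists_eq_zero_forall_ne_zero_Ioc {φ : ℝ → ℝ} {a b : ℝ}
    (hφ : ContinuousOn φ (Icc a b)) (hab : a ≤ b) (ha : φ a = 0) (hb : φ b ≠ 0) :
    ∃ c ∈ Ico a b, φ c = 0 ∧ ∀ u ∈ Ioc c b, φ u ≠ 0 := by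
  have hzeros : IsClosed (Icc a b ∩ φ ⁻¹' {0}) :=
    hφ.preimage_isClosed_of_isClosed isClosed_Icc isClosed_singleton
  obtain ⟨c, ⟨hc, hφc⟩, hmax⟩ :=
    (isCompact_Icc.of_isClosed_subset hzeros inter_subset_left).exists_isGreatest
      ⟨a, left_mem_Icc.2 hab, ha⟩
  refine ⟨c, ⟨hc.1, hc.2.lt_of_ne ?_⟩, hφc, fun u hu hφu => ?_⟩
  · rintro rfl; exact hb hφc
  · exact (hmax ⟨⟨hc.1.trans hu.1.le, hu.2⟩, hφu⟩).not_gt hu.1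

theorem one_add_div_mul_one_add_mul_rpow_mul_le {p q Q L x t a γ : ℝ} (ht : 0 < t)
    (hta : t ≤ a) (hγ : 0 ≤ γ) (hp : 0 ≤ p) (hq : 0 ≤ q) (hqQ : q ≤ Q) (hx : 0 ≤ x)
    (hxL : x ≤ L * t) :
    (1 + p) / t * ((1 + q * x ^ γ) * x) ≤
      (t⁻¹ + ((1 + Q * L ^ γ * a ^ γ) * (p / t) + Q * L ^ γ * t ^ (γ - 1))) * x := by
  have hL : 0 ≤ L := nonneg_of_mul_nonneg_left (hx.trans hxL) ht
  have hQ : 0 ≤ Q := hq.trans hqQ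
  set w := q * x ^ γ
  have hwt : w ≤ Q * L ^ γ * t ^ γ := calc
    w ≤ Q * (L * t) ^ γ := mul_le_mul hqQ (Real.rpow_le_rpow hx hxL hγ) (Real.rpow_nonneg hx γ) hQ
    _ = Q * L ^ γ * t ^ γ := by rw [Real.mul_rpow hL ht.le]; ring
  have hwa : p / t * w ≤ p / t * (Q * L ^ γ * a ^ γ) := by
    gcongr
    exact hwt.trans (by gcongr)
  have hw_div : w / t ≤ Q * L ^ γ * t ^ (γ - 1) := by
    rw [Real.rpow_sub_one ht.ne', ← mul_div_assoc]
    gcongr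
  calc (1 + p) / t * ((1 + w) * x) = (t⁻¹ + p / t + w / t + p / t * w) * x := by
        field_simp
        ring
    _ ≤ _ := mul_le_mul_of_nonneg_right (by linarith) hx

theorem tendsto_div_self_nhdsGT_of_eq_zero {φ : ℝ → ℝ} {c T : ℝ} (hc : c ∈ Ico 0 T)
    (hφ : ContinuousOn φ (Icc 0 T)) (hφc : φ c = 0) (hφ'0 : HasDerivWithinAt φ 0 (Ici 0) 0) :
    Tendsto (fun s => φ s / s) (𝓝[>] c) (𝓝 0) := by
  rcases hc.1.eq_or_lt with rfl | hc0
  · have := (hasDerivWithinAt_iff_tendsto_slope' self_notMem_Ioi).1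
      (hφ'0.mono Ioi_subset_Ici_self)
    exact this.congr fun s => by simp [slope_def_field, hφc]
  · have hφc' : ContinuousWithinAt φ (Ioi c) c :=
      (hφ c (Ico_subset_Icc_self hc)).mono_of_mem_nhdsWithin
        (mem_nhdsWithin_of_mem_nhds (Icc_mem_nhds hc0 hc.2))
    have := hφc'.tendsto.div (tendsto_nhdsWithin_of_tendsto_nhds tendsto_id) hc0.ne'
    rwa [hφc, zero_div] at this

theorem LipschitzOnWith.eqOn_zero_of_ae_hasDerivAt_le {φ r : ℝ → ℝ} {K : ℝ≥0} {T : ℝ}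
    (hφ : LipschitzOnWith K φ (Icc 0 T)) (hφ_nonneg : ∀ t ∈ Icc 0 T, 0 ≤ φ t) (hφ0 : φ 0 = 0)
    (hφ'0 : HasDerivWithinAt φ 0 (Ici 0) 0) (hr : IntegrableOn r (Ioc 0 T))
    (hbd : ∀ᵐ t, t ∈ Ioo 0 T → ∀ y, HasDerivAt φ y t → y ≤ (t⁻¹ + r t) * φ t) :
    EqOn φ 0 (Icc 0 T) := by
  intro t₀ ht₀
  show φ t₀ = 0
  by_contra hne
  have hφ_cont : ContinuousOn φ (Icc 0 t₀) := hφ.continuousOn.mono (Icc_subset_Icc_right ht₀.2)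
  obtain ⟨c, hc, hφc, hφ_ne⟩ := hφ_cont.exists_eq_zero_forall_ne_zero_Ioc ht₀.1 hφ0 hne
  have hct₀ : Ioo c t₀ ⊆ Ioc 0 T := fun s hs => ⟨hc.1.trans_lt hs.1, hs.2.le.trans ht₀.2⟩
  have hr_abs : IntegrableOn (fun u => |r u|) (Ioc 0 T) := hr.abs
  set R := ∫ u in Ioc 0 T, |r u|
  have hlower : ∀ s ∈ Ioo c t₀, φ t₀ / t₀ / Real.exp R ≤ φ s / s := by
    intro s hs
    have hs0 : 0 < s := (hct₀ hs).1
    have hsub : Icc s t₀ ⊆ Icc 0 T := Icc_subset_Icc hs0.le ht₀.2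
    have hbd' : ∀ᵐ u, u ∈ Ioo s t₀ → ∀ y, HasDerivAt φ y u → y ≤ (u⁻¹ + |r u|) * φ u := by
      filter_upwards [hbd] with u hbd hu y hy
      have hu' : u ∈ Icc 0 T := hsub (Ioo_subset_Icc_self hu)
      exact (hbd ⟨hs0.trans hu.1, hu.2.trans_le ht₀.2⟩ y hy).trans
        (mul_le_mul_of_nonneg_right (by gcongr; exact le_abs_self _) (hφ_nonneg u hu'))
    rw [div_le_iff₀ (Real.exp_pos R)]
    calc φ t₀ / t₀ ≤ Real.exp (∫ u in Ioc s t₀, |r u|) * (φ s / s) :=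
          (hφ.mono hsub).div_le_exp_integral_mul_div hs0 hs.2.le
            (fun u hu => (hφ_nonneg u (hsub hu)).lt_of_ne' (hφ_ne u ⟨hs.1.trans_le hu.1, hu.2⟩))
            (hr_abs.mono_set (Ioc_subset_Ioc hs0.le ht₀.2)) hbd'
      _ ≤ Real.exp R * (φ s / s) := by
          gcongr
          · exact div_nonneg (hφ_nonneg s (hsub (left_mem_Icc.2 hs.2.le))) hs0.le
          · exact setIntegral_mono_set hr_abs (Eventually.of_forall fun _ => abs_nonneg _)
              (Ioc_subset_Ioc hs0.le ht₀.2).eventuallyLE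
      _ = φ s / s * Real.exp R := mul_comm _ _
  have hlim :=
    tendsto_div_self_nhdsGT_of_eq_zero ⟨hc.1, hc.2.trans_le ht₀.2⟩ hφ.continuousOn hφc hφ'0
  have hε : 0 < φ t₀ / t₀ / Real.exp R := by
    have ht₀0 : 0 < t₀ := hc.1.trans_lt hc.2
    have := (hφ_nonneg t₀ ht₀).lt_of_ne' hne
    positivity
  refine hε.not_ge (ge_of_tendsto hlim ?_)
  filter_upwards [Ioo_mem_nhdsGT hc.2] with s hs using hlower s hs

theorem isUniquenessBound_of_le_one_add_general
    (a b γ : ℝ) (hγ : 0 < γ)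
    (g : ℝ → ℝ → ℝ) (q₁ q₂ : ℝ → ℝ)
    (hq₁0 : ∀ t ∈ Set.Ioc (0:ℝ) a, 0 ≤ q₁ t)
    (hq₁int : IntegrableOn (fun s => q₁ s / s) (Set.Ioc 0 a))
    (hq₂c : ContinuousOn q₂ (Set.Icc 0 a))
    (hq₂0 : ∀ t ∈ Set.Icc (0:ℝ) a, 0 ≤ q₂ t)
    (hgle : ∀ t ∈ Set.Ioc (0:ℝ) a, ∀ x ∈ Set.Icc (0:ℝ) b,
      g t x ≤ (1 + q₁ t) / t * ((1 + q₂ t * x ^ γ) * x)) :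
    IsUniquenessBound a b g := by
  intro a' ha' φ ⟨K, hK⟩ hrange hφ0 hφ'0 hae
  obtain ⟨Q, hQ⟩ := isCompact_Icc.bddAbove_image hq₂c
  have hIoc : Ioc 0 a' ⊆ Ioc 0 a := Ioc_subset_Ioc_right ha'.2
  have hr : IntegrableOn
      (fun t => (1 + Q * K ^ γ * a' ^ γ) * (q₁ t / t) + Q * K ^ γ * t ^ (γ - 1)) (Ioc 0 a') :=
    ((hq₁int.mono_set hIoc).const_mul _).add <| Integrable.const_mul
      ((intervalIntegrable_iff_integrableOn_Ioc_of_le ha'.1.le).1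
        (intervalIntegral.intervalIntegrable_rpow' (by linarith))) _
  refine hK.eqOn_zero_of_ae_hasDerivAt_le (fun t ht => (hrange t ht).1) hφ0 hφ'0 hr ?_
  filter_upwards [hae] with t hae ht y hy
  have htI : t ∈ Icc 0 a' := Ioo_subset_Icc_self ht
  have htIa : t ∈ Ioc 0 a := hIoc (Ioo_subset_Ioc_self ht)
  have hφt := hrange t htI
  have hφK : φ t ≤ K * t := by
    simpa [hφ0, abs_of_nonneg hφt.1, abs_of_pos ht.1] using
      hK.dist_le_mul t htI 0 ⟨le_rfl, ha'.1.le⟩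
  calc y ≤ g t (φ t) := hae (Ioo_subset_Ioc_self ht) y hy
    _ ≤ (1 + q₁ t) / t * ((1 + q₂ t * φ t ^ γ) * φ t) := hgle t htIa _ hφt
    _ ≤ _ := one_add_div_mul_one_add_mul_rpow_mul_le ht.1 ht.2.le hγ.le (hq₁0 t htIa)
        (hq₂0 t (Ioc_subset_Icc_self htIa)) (hQ (mem_image_of_mem q₂ (Ioc_subset_Icc_self htIa)))
        hφt.1 hφK

/-- Corollary 1: `g` is a uniqueness bound provided
`g(t,x) ≤ (1 + q₁(t))/t · (1 + q₂(t) x^γ) x`, where `q₁ : (0,a] → [0,∞)` is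
measurable with `∫_0^a q₁(s)/s ds < +∞`, `q₂ : [0,a] → [0,∞)` is continuous with
`q₂'` continuous and integrable on `(0,a)`, and `γ > 0`. -/
theorem isUniquenessBound_of_le_one_add
    (a b γ : ℝ) (ha : 0 < a) (hb : 0 < b) (hγ : 0 < γ)
    (g : ℝ → ℝ → ℝ) (q₁ q₂ q₂' : ℝ → ℝ)
    (hg0 : ∀ t ∈ Set.Ioc (0:ℝ) a, ∀ x ∈ Set.Icc (0:ℝ) b, 0 ≤ g t x)
    (hq₁0 : ∀ t ∈ Set.Ioc (0:ℝ) a, 0 ≤ q₁ t)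
    (hq₁m : AEMeasurable q₁ (volume.restrict (Set.Ioc 0 a)))
    (hq₁int : IntegrableOn (fun s => q₁ s / s) (Set.Ioc 0 a))
    (hq₂c : ContinuousOn q₂ (Set.Icc 0 a))
    (hq₂0 : ∀ t ∈ Set.Icc (0:ℝ) a, 0 ≤ q₂ t)
    (hq₂' : ∀ t ∈ Set.Ioo (0:ℝ) a, HasDerivAt q₂ (q₂' t) t)
    (hq₂'c : ContinuousOn q₂' (Set.Ioo 0 a))
    (hq₂'int : IntegrableOn q₂' (Set.Ioo 0 a))
    (hgle : ∀ t ∈ Set.Ioc (0:ℝ) a, ∀ x ∈ Set.Icc (0:ℝ) b,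
      g t x ≤ (1 + q₁ t) / t * ((1 + q₂ t * x ^ γ) * x)) :
    IsUniquenessBound a b g :=
  isUniquenessBound_of_le_one_add_general a b γ hγ g q₁ q₂ hq₁0 hq₁int hq₂c hq₂0 hgle
end

section
/- Let a, b ∈ (0,∞) and define f : U = [0,a] × [−b,b] → ℝ by f(t,x) = t if |x| > ln(1+t²); f(t,x) = (e^{|x|} − 1)/t if |x| ≤ ln(1+t²) and t > 0; and f(0,0) = 0. Then f is continuous on U, 0 ≤ f(t,x) ≤ t for all (t,x) ∈ U, and the initial value problem x' = f(t,x), t ∈ [0,a], x(0) = 0 has only the zero solution. -/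
/-!
Since `0 ≤ f(t,x) ≤ t`, a solution `x` is nondecreasing, hence nonnegative, and `x(t) ≤ a t`;
moreover `x'(0) = f(0,0) = 0`, so `u(t) = x(t)/t → 0` as `t → 0⁺`. From `f(t,x) ≤ (eˣ - 1)/t`
and `eˣ - 1 - x ≤ x² eˣ` one gets `u' = (t f(t,x) - x)/t² ≤ u² eˣ ≤ K u` with `K = a e^{a²}`.
Grönwall's inequality on `[ε, t]` gives `u(t) ≤ u(ε) e^{K(t-ε)}`, and letting `ε → 0⁺` yields
`u(t) ≤ 0`.
-/

open Set Real Filter Topology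

lemma exp_sub_one_le_mul_exp (x : ℝ) : exp x - 1 ≤ x * exp x := by
  have h := mul_le_mul_of_nonneg_right (add_one_le_exp (-x)) (exp_pos x).le
  rw [← exp_add, neg_add_cancel, exp_zero] at h
  linarith

lemma exp_sub_one_sub_le_sq_mul_exp {x : ℝ} (hx : 0 ≤ x) : exp x - 1 - x ≤ x ^ 2 * exp x := by
  nlinarith [mul_le_mul_of_nonneg_left (exp_sub_one_le_mul_exp x) hx, exp_sub_one_le_mul_exp x]

noncomputable def nonLipschitzField (t x : ℝ) : ℝ :=
  if log (1 + t ^ 2) < |x| then t else if 0 < t then (exp |x| - 1) / t else 0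

@[simp]
lemma nonLipschitzField_zero_left (x : ℝ) : nonLipschitzField 0 x = 0 := by
  simp [nonLipschitzField]

lemma nonLipschitzField_of_pos {t : ℝ} (ht : 0 < t) (x : ℝ) :
    nonLipschitzField t x = min t ((exp |x| - 1) / t) := by
  have h1 : 0 < 1 + t ^ 2 := by positivity
  unfold nonLipschitzField
  split_ifs with h
  · rw [log_lt_iff_lt_exp h1] at h
    rw [min_eq_left ((le_div_iff₀ ht).2 (by nlinarith))]
  · rw [not_lt, le_log_iff_exp_le h1] at h
    rw [min_eq_right ((div_le_iff₀ ht).2 (by nlinarith))]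

lemma nonLipschitzField_nonneg {t : ℝ} (ht : 0 ≤ t) (x : ℝ) : 0 ≤ nonLipschitzField t x := by
  obtain rfl | ht := ht.eq_or_lt
  · simp
  rw [nonLipschitzField_of_pos ht]
  exact le_min ht.le (div_nonneg (by linarith [one_le_exp (abs_nonneg x)]) ht.le)

lemma nonLipschitzField_le {t : ℝ} (ht : 0 ≤ t) (x : ℝ) : nonLipschitzField t x ≤ t := by
  obtain rfl | ht := ht.eq_or_lt
  · simp
  exact (nonLipschitzField_of_pos ht x).trans_le (min_le_left _ _)

lemma nonLipschitzField_mul_sub_le {t x : ℝ} (ht : 0 < t) (hx : 0 ≤ x) :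
    nonLipschitzField t x * t - x ≤ x ^ 2 * exp x := by
  have h : nonLipschitzField t x * t ≤ exp x - 1 := by
    rw [← le_div_iff₀ ht, nonLipschitzField_of_pos ht, abs_of_nonneg hx]
    exact min_le_right _ _
  linarith [exp_sub_one_sub_le_sq_mul_exp hx]

lemma nonLipschitzField_mul_sub_div_sq_le {t y c : ℝ} (ht : 0 < t) (hy₀ : 0 ≤ y) (hy : y ≤ c * t) :
    (nonLipschitzField t y * t - y * 1) / t ^ 2 ≤ c * exp y * (y / t) := by
  calc (nonLipschitzField t y * t - y * 1) / t ^ 2 ≤ y ^ 2 * exp y / t ^ 2 := by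
        gcongr
        simpa using nonLipschitzField_mul_sub_le ht hy₀
    _ = y / t * exp y * (y / t) := by field_simp
    _ ≤ c * exp y * (y / t) := by
        gcongr
        exact (div_le_iff₀ ht).2 hy

lemma continuousOn_nonLipschitzField :
    ContinuousOn (fun p : ℝ × ℝ => nonLipschitzField p.1 p.2) {p | 0 ≤ p.1} := by
  rintro ⟨t, x⟩ (ht : 0 ≤ t)
  obtain rfl | ht := ht.eq_or_lt
  · rw [ContinuousWithinAt, nonLipschitzField_zero_left]
    refine squeeze_zero' ?_ ?_ ((continuous_fst.tendsto (0, x)).mono_left nhdsWithin_le_nhds)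
    · exact eventually_nhdsWithin_of_forall fun p hp => nonLipschitzField_nonneg hp p.2
    · exact eventually_nhdsWithin_of_forall fun p hp => nonLipschitzField_le hp p.2
  · have hpos : ∀ᶠ p : ℝ × ℝ in 𝓝 (t, x), 0 < p.1 :=
      continuousAt_fst.eventually (lt_mem_nhds ht)
    refine ContinuousAt.continuousWithinAt ?_
    refine ContinuousAt.congr ?_ (hpos.mono fun p hp => (nonLipschitzField_of_pos hp p.2).symm)
    exact continuousAt_fst.min <|
      ((continuous_exp.comp continuous_snd.abs).continuousAt.sub continuousAt_const).div
        continuousAt_fst ht.ne'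

theorem le_zero_of_deriv_le_mul_of_tendsto_zero {u u' : ℝ → ℝ} {K c a t : ℝ}
    (hu : ContinuousOn u (Ioc c a)) (hu' : ∀ s ∈ Ioo c a, HasDerivWithinAt u (u' s) (Ici s) s)
    (bound : ∀ s ∈ Ioo c a, u' s ≤ K * u s) (hlim : Tendsto u (𝓝[>] c) (𝓝 0))
    (ht : t ∈ Ioc c a) : u t ≤ 0 := by
  have hgron : ∀ ε ∈ Ioo c t, u t ≤ u ε * exp (K * (t - ε)) := by
    intro ε hε
    have hIco : Ico ε t ⊆ Ioo c a := fun s hs => ⟨hε.1.trans_le hs.1, hs.2.trans_le ht.2⟩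
    have := le_gronwallBound_of_liminf_deriv_right_le (K := K) (ε := 0)
      (hu.mono (Icc_subset_Ioc hε.1 ht.2))
      (fun s hs r hr => (hu' s (hIco hs)).liminf_right_slope_le hr) le_rfl
      (fun s hs => by simpa using bound s (hIco hs)) t ⟨hε.2.le, le_rfl⟩
    rwa [gronwallBound_ε0] at this
  have hexp : Continuous fun ε => exp (K * (t - ε)) := by fun_prop
  have hlim' : Tendsto (fun ε => u ε * exp (K * (t - ε))) (𝓝[>] c)
      (𝓝 (0 * exp (K * (t - c)))) :=
    hlim.mul (hexp.continuousWithinAt (s := Ioi c) (x := c))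
  rw [zero_mul] at hlim'
  exact ge_of_tendsto hlim' (eventually_of_mem (Ioo_mem_nhdsGT ht.1) hgron)

section Solution

variable {a : ℝ} {x : ℝ → ℝ}

lemma nonneg_of_hasDerivWithinAt_nonLipschitzField (hx₀ : x 0 = 0)
    (hx : ∀ t ∈ Icc 0 a, HasDerivWithinAt x (nonLipschitzField t (x t)) (Icc 0 a) t) :
    ∀ t ∈ Icc 0 a, 0 ≤ x t := by
  have hmono : MonotoneOn x (Icc 0 a) := by
    refine monotoneOn_of_hasDerivWithinAt_nonneg (f' := fun t => nonLipschitzField t (x t))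
      (convex_Icc 0 a) (fun t ht => (hx t ht).continuousWithinAt) ?_ ?_ <;> rw [interior_Icc]
    · exact fun t ht => (hx t (Ioo_subset_Icc_self ht)).mono Ioo_subset_Icc_self
    · exact fun t ht => nonLipschitzField_nonneg ht.1.le _
  intro t ht
  simpa [hx₀] using hmono ⟨le_rfl, ht.1.trans ht.2⟩ ht ht.1

lemma le_mul_of_hasDerivWithinAt_nonLipschitzField (hx₀ : x 0 = 0)
    (hx : ∀ t ∈ Icc 0 a, HasDerivWithinAt x (nonLipschitzField t (x t)) (Icc 0 a) t) :
    ∀ t ∈ Icc 0 a, x t ≤ a * t := by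
  intro t ht
  have hbound : ∀ s ∈ Icc 0 a, ‖nonLipschitzField s (x s)‖ ≤ a := fun s hs => by
    rw [norm_of_nonneg (nonLipschitzField_nonneg hs.1 _)]
    exact (nonLipschitzField_le hs.1 _).trans hs.2
  have := (convex_Icc 0 a).norm_image_sub_le_of_norm_hasDerivWithin_le hx hbound
    ⟨le_rfl, ht.1.trans ht.2⟩ ht
  rw [hx₀, sub_zero, sub_zero, norm_of_nonneg ht.1] at this
  exact (le_norm_self _).trans this

theorem eq_zero_of_hasDerivWithinAt_nonLipschitzField (hx₀ : x 0 = 0)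
    (hx : ∀ t ∈ Icc 0 a, HasDerivWithinAt x (nonLipschitzField t (x t)) (Icc 0 a) t) :
    ∀ t ∈ Icc 0 a, x t = 0 := by
  have hnonneg := nonneg_of_hasDerivWithinAt_nonLipschitzField hx₀ hx
  have hlin := le_mul_of_hasDerivWithinAt_nonLipschitzField hx₀ hx
  intro t ht
  obtain rfl | ht₀ := ht.1.eq_or_lt
  · exact hx₀
  have ha : 0 < a := ht₀.trans_le ht.2
  have hlim : Tendsto (fun s => x s / s) (𝓝[>] 0) (𝓝 0) := by
    have := hasDerivWithinAt_iff_tendsto_slope.1 (hx 0 ⟨le_rfl, ha.le⟩)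
    rw [Icc_sdiff_left, nhdsWithin_Ioc_eq_nhdsGT ha, nonLipschitzField_zero_left] at this
    exact this.congr fun s => by rw [slope_def_field, hx₀, sub_zero, sub_zero]
  have hx' : ∀ s ∈ Ioo 0 a, HasDerivAt x (nonLipschitzField s (x s)) s := fun s hs =>
    (hx s (Ioo_subset_Icc_self hs)).hasDerivAt (Icc_mem_nhds hs.1 hs.2)
  have hbound : ∀ s ∈ Ioo 0 a,
      (nonLipschitzField s (x s) * s - x s * 1) / s ^ 2 ≤ a * exp (a ^ 2) * (x s / s) := by
    intro s hs
    have hs' : s ∈ Icc 0 a := Ioo_subset_Icc_self hs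
    calc _ ≤ a * exp (x s) * (x s / s) :=
          nonLipschitzField_mul_sub_div_sq_le hs.1 (hnonneg s hs') (hlin s hs')
      _ ≤ a * exp (a ^ 2) * (x s / s) := by
          have := div_nonneg (hnonneg s hs') hs.1.le
          gcongr
          nlinarith [hlin s hs', hs.2]
  have hle : x t / t ≤ 0 :=
    le_zero_of_deriv_le_mul_of_tendsto_zero (u := fun s => x s / s)
      (ContinuousOn.div (fun s hs => (hx s (Ioc_subset_Icc_self hs)).continuousWithinAt.mono
        Ioc_subset_Icc_self) (continuousOn_id' _) fun s hs => hs.1.ne')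
      (fun s hs => ((hx' s hs).div (hasDerivAt_id' s) hs.1.ne').hasDerivWithinAt) hbound hlim
      ⟨ht₀, ht.2⟩
  linarith [hnonneg t ht, (div_le_iff₀ ht₀).1 hle]

end Solution

theorem example_uniqueness_general
    (a b : ℝ)
    (f : ℝ → ℝ → ℝ)
    (hf : ∀ t x : ℝ,
      f t x = if Real.log (1 + t ^ 2) < |x| then t
              else if 0 < t then (Real.exp |x| - 1) / t else 0) :
    ContinuousOn (fun p : ℝ × ℝ => f p.1 p.2) (Set.Icc 0 a ×ˢ Set.Icc (-b) b) ∧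
    (∀ t ∈ Set.Icc (0:ℝ) a, ∀ x ∈ Set.Icc (-b) b, 0 ≤ f t x ∧ f t x ≤ t) ∧
    (∀ x : ℝ → ℝ,
      (∀ t ∈ Set.Icc (0:ℝ) a, x t ∈ Set.Icc (-b) b) →
      x 0 = 0 →
      (∀ t ∈ Set.Icc (0:ℝ) a, HasDerivWithinAt x (f t (x t)) (Set.Icc 0 a) t) →
      ∀ t ∈ Set.Icc (0:ℝ) a, x t = 0) := by
  obtain rfl : f = nonLipschitzField := funext fun t => funext (hf t)
  exact ⟨continuousOn_nonLipschitzField.mono fun p hp => hp.1.1,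
    fun t ht x _ => ⟨nonLipschitzField_nonneg ht.1 x, nonLipschitzField_le ht.1 x⟩,
    fun x _ hx₀ hx => eq_zero_of_hasDerivWithinAt_nonLipschitzField hx₀ hx⟩

/-- The example: `f(t,x) = t` if `|x| > ln(1+t²)`, `f(t,x) = (e^{|x|}-1)/t` if
`|x| ≤ ln(1+t²)` and `t > 0`, and `f(0,0) = 0`.  Then `f` is continuous on
`U = [0,a] × [-b,b]`, `0 ≤ f(t,x) ≤ t` on `U`, and the initial value problem
`x' = f(t,x)`, `x(0) = 0` has only the zero solution on `[0,a]`. -/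
theorem example_uniqueness
    (a b : ℝ) (ha : 0 < a) (hb : 0 < b)
    (f : ℝ → ℝ → ℝ)
    (hf : ∀ t x : ℝ,
      f t x = if Real.log (1 + t ^ 2) < |x| then t
              else if 0 < t then (Real.exp |x| - 1) / t else 0) :
    ContinuousOn (fun p : ℝ × ℝ => f p.1 p.2) (Set.Icc 0 a ×ˢ Set.Icc (-b) b) ∧
    (∀ t ∈ Set.Icc (0:ℝ) a, ∀ x ∈ Set.Icc (-b) b, 0 ≤ f t x ∧ f t x ≤ t) ∧
    (∀ x : ℝ → ℝ,
      (∀ t ∈ Set.Icc (0:ℝ) a, x t ∈ Set.Icc (-b) b) →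
      x 0 = 0 →
      (∀ t ∈ Set.Icc (0:ℝ) a, HasDerivWithinAt x (f t (x t)) (Set.Icc 0 a) t) →
      ∀ t ∈ Set.Icc (0:ℝ) a, x t = 0) :=
  example_uniqueness_general a b f hf
end

section
/- Let a, b > 0 and let g : (0,a] × [0,b] → [0,∞) be a given function. Then the following are equivalent: (1) g is a uniqueness bound; (2) whenever φ : [0,ã] ⊂ [0,a] → ℝ is Lipschitz continuous and satisfies φ'(t) ≤ g(t, |φ(t)|) for almost all t ∈ [0,ã], φ(0) ≤ 0 and φ'(0) ≤ 0, then φ(t) ≤ 0 for all t ∈ [0,ã]. -/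
/-!
(2) ⇒ (1) is immediate: a nonnegative function which is `≤ 0` vanishes. For (1) ⇒ (2) apply the
uniqueness bound to `φ⁺ = max φ 0`. It is Lipschitz, vanishes at `0` and has right derivative `0`
there because `φ 0 ≤ 0` and `φ'(0) ≤ 0`. Where `φ t ≤ 0`, `t` is a minimum of `φ⁺`, so its
derivative is `0 ≤ g`; where `φ t > 0`, `φ⁺ = φ` near `t` and `φ'(t) ≤ g(t, |φ t|) = g(t, φ⁺ t)`.
-/

open MeasureTheory Set Filter Topology Asymptotics

theorem HasDerivWithinAt.max_zero_of_nonpos {φ : ℝ → ℝ} {d x : ℝ}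
    (hφ : HasDerivWithinAt φ d (Ici x) x) (hφx : φ x ≤ 0) (hd : d ≤ 0) :
    HasDerivWithinAt (fun t => max (φ t) 0) 0 (Ici x) x := by
  rw [hasDerivWithinAt_iff_isLittleO] at hφ ⊢
  refine IsBigO.trans_isLittleO (IsBigO.of_bound 1 ?_) hφ
  filter_upwards [self_mem_nhdsWithin] with t (ht : x ≤ t)
  have hle : φ t ≤ φ t - φ x - (t - x) • d := by
    have : 0 ≤ (t - x) * -d := mul_nonneg (sub_nonneg.2 ht) (neg_nonneg.2 hd)
    rw [smul_eq_mul]; linarith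
  simp only [max_eq_right hφx, smul_zero, sub_zero, Real.norm_eq_abs, one_mul]
  rw [abs_of_nonneg (le_max_right _ _)]
  exact max_le (hle.trans (le_abs_self _)) (abs_nonneg _)

theorem HasDerivAt.eq_zero_or_of_max_zero {φ : ℝ → ℝ} {y t : ℝ} (hφ : ContinuousAt φ t)
    (hy : HasDerivAt (fun s => max (φ s) 0) y t) : y = 0 ∨ 0 < φ t ∧ HasDerivAt φ y t := by
  rcases le_or_gt (φ t) 0 with hle | hpos
  · have hmin : IsLocalMin (fun s => max (φ s) 0) t :=
      Eventually.of_forall fun s => by simp only [max_eq_right hle, le_max_right]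
    exact .inl (hmin.hasDerivAt_eq_zero hy)
  · have hEq : (fun s => max (φ s) 0) =ᶠ[𝓝 t] φ := by
      filter_upwards [hφ.eventually (eventually_gt_nhds hpos)] with s hs
      exact max_eq_left hs.le
    exact .inr ⟨hpos, hy.congr_of_eventuallyEq hEq.symm⟩

theorem IsUniquenessBound.nonpos {a b : ℝ} {g : ℝ → ℝ → ℝ} (hUB : IsUniquenessBound a b g)
    (hg0 : ∀ t ∈ Ioc (0:ℝ) a, ∀ x ∈ Icc (0:ℝ) b, 0 ≤ g t x) {a' : ℝ} (ha' : a' ∈ Ioc 0 a)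
    {φ : ℝ → ℝ} {K : NNReal} (hK : LipschitzOnWith K φ (Icc 0 a'))
    (hφb : ∀ t ∈ Icc (0:ℝ) a', |φ t| ≤ b) (hφ0 : φ 0 ≤ 0) {d₀ : ℝ} (hd₀ : d₀ ≤ 0)
    (hφ' : HasDerivWithinAt φ d₀ (Ici 0) 0)
    (hae : ∀ᵐ t ∂volume, t ∈ Icc (0:ℝ) a' → ∀ y, HasDerivAt φ y t → y ≤ g t |φ t|) :
    ∀ t ∈ Icc (0:ℝ) a', φ t ≤ 0 := by
  set ψ : ℝ → ℝ := fun t => max (φ t) 0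
  have hb : 0 ≤ b := (abs_nonneg _).trans (hφb 0 ⟨le_rfl, ha'.1.le⟩)
  have hψb : ∀ t ∈ Icc (0:ℝ) a', ψ t ∈ Icc 0 b := fun t ht =>
    ⟨le_max_right _ _, max_le (le_of_abs_le (hφb t ht)) hb⟩
  have hψae : ∀ᵐ t ∂volume, t ∈ Ioc (0:ℝ) a' → ∀ y, HasDerivAt ψ y t → y ≤ g t (ψ t) := by
    filter_upwards [hae, volume.ae_ne a'] with t hφt hta' ht y hy
    have htIcc : t ∈ Icc (0:ℝ) a' := Ioc_subset_Icc_self ht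
    have hcont : ContinuousAt φ t :=
      hK.continuousOn.continuousAt (Icc_mem_nhds ht.1 (lt_of_le_of_ne ht.2 hta'))
    rcases hy.eq_zero_or_of_max_zero hcont with rfl | ⟨hpos, hφy⟩
    · exact hg0 t ⟨ht.1, ht.2.trans ha'.2⟩ (ψ t) (hψb t htIcc)
    · simpa only [ψ, abs_of_pos hpos, max_eq_left hpos.le] using hφt htIcc y hφy
  have hψ := hUB a' ha' ψ ⟨K, lipschitzOnWith_iff_restrict.mpr (hK.to_restrict.max_const 0)⟩
    hψb (max_eq_right hφ0) (hφ'.max_zero_of_nonpos hφ0 hd₀) hψae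
  exact fun t ht => (le_max_left _ _).trans_eq (hψ t ht)

theorem isUniquenessBound_iff_general
    (a b : ℝ)
    (g : ℝ → ℝ → ℝ)
    (hg0 : ∀ t ∈ Set.Ioc (0:ℝ) a, ∀ x ∈ Set.Icc (0:ℝ) b, 0 ≤ g t x) :
    IsUniquenessBound a b g ↔
      (∀ a' ∈ Set.Ioc (0:ℝ) a, ∀ φ : ℝ → ℝ,
        (∃ K, LipschitzOnWith K φ (Set.Icc 0 a')) →
        (∀ t ∈ Set.Icc (0:ℝ) a', |φ t| ≤ b) →
        φ 0 ≤ 0 →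
        (∃ d₀ ≤ (0:ℝ), HasDerivWithinAt φ d₀ (Set.Ici 0) 0) →
        (∀ᵐ t ∂volume, t ∈ Set.Icc (0:ℝ) a' → ∀ y, HasDerivAt φ y t → y ≤ g t |φ t|) →
        ∀ t ∈ Set.Icc (0:ℝ) a', φ t ≤ 0) := by
  refine ⟨fun hUB a' ha' φ ⟨K, hK⟩ hφb hφ0 ⟨d₀, hd₀, hφ'⟩ hae =>
    hUB.nonpos hg0 ha' hK hφb hφ0 hd₀ hφ' hae, fun h a' ha' φ hK hφ hφ0 hφ' hae => ?_⟩
  have habs : ∀ t ∈ Icc (0:ℝ) a', |φ t| = φ t := fun t ht => abs_of_nonneg (hφ t ht).1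
  have hle := h a' ha' φ hK (fun t ht => (habs t ht).trans_le (hφ t ht).2) hφ0.le
    ⟨0, le_rfl, hφ'⟩ <| by
    filter_upwards [hae, volume.ae_ne 0] with t hφt ht0 ht
    simpa only [habs t ht] using hφt ⟨lt_of_le_of_ne ht.1 (Ne.symm ht0), ht.2⟩
  exact fun t ht => le_antisymm (hle t ht) (hφ t ht).1

/-- Proposition 2: `g` is a uniqueness bound if and only if every Lipschitz
continuous `φ : [0,a'] → ℝ` (with `|φ| ≤ b`) satisfying
`φ'(t) ≤ g(t,|φ(t)|)` for a.a. `t ∈ [0,a']`, `φ(0) ≤ 0` and `φ'(0) ≤ 0`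
(the one-sided derivative at `0` being assumed to exist), is nonpositive
on `[0,a']`. -/
theorem isUniquenessBound_iff
    (a b : ℝ) (ha : 0 < a) (hb : 0 < b)
    (g : ℝ → ℝ → ℝ)
    (hg0 : ∀ t ∈ Set.Ioc (0:ℝ) a, ∀ x ∈ Set.Icc (0:ℝ) b, 0 ≤ g t x) :
    IsUniquenessBound a b g ↔
      (∀ a' ∈ Set.Ioc (0:ℝ) a, ∀ φ : ℝ → ℝ,
        (∃ K, LipschitzOnWith K φ (Set.Icc 0 a')) →
        (∀ t ∈ Set.Icc (0:ℝ) a', |φ t| ≤ b) →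
        φ 0 ≤ 0 →
        (∃ d₀ ≤ (0:ℝ), HasDerivWithinAt φ d₀ (Set.Ici 0) 0) →
        (∀ᵐ t ∂volume, t ∈ Set.Icc (0:ℝ) a' → ∀ y, HasDerivAt φ y t → y ≤ g t |φ t|) →
        ∀ t ∈ Set.Icc (0:ℝ) a', φ t ≤ 0) :=
  isUniquenessBound_iff_general a b g hg0
end
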